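/- Let 0 < y < 1 and let a > 0 with a ∉ [1−√y, 1+√y]; set φ(a) = a + ya/(a−1). Then m₂(φ(a)) = ∫ x²/(φ(a)−x)² dF_y(x) = [(a−1) + y(a+1)] / [(a−1)((a−1)² − y)]. -/

import Mathlib

open MeasureTheory Real

/-- Density of the Marčenko–Pastur distribution with ratio parameter `c` (the absolutely
continuous part; it vanishes outside `[(1-√c)², (1+√c)²]`). -/
noncomputable def mpDensity (c x : ℝ) : ℝ :=
  if (1 - Real.sqrt c) ^ 2 ≤ x ∧ x ≤ (1 + Real.sqrt c) ^ 2 then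
    Real.sqrt ((x - (1 - Real.sqrt c) ^ 2) * ((1 + Real.sqrt c) ^ 2 - x)) /
      (2 * Real.pi * c * x)
  else 0

/-- The Marčenko–Pastur law with ratio parameter `c > 0`: an atom of mass `max (1 - 1/c) 0`
at `0` plus the absolutely continuous part with density `mpDensity c`.  For `c < 1` (in
particular for `c = y ∈ (0,1)`) the atom vanishes and this is the measure `F_y` with density
`(1/(2πxy))√((x-a_y)(b_y-x))` on `[a_y, b_y]`, `a_y = (1-√y)²`, `b_y = (1+√y)²`. -/
noncomputable def mpLaw (c : ℝ) : Measure ℝ :=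
  ENNReal.ofReal (1 - 1 / c) • Measure.dirac 0 +
    (volume : Measure ℝ).withDensity fun x => ENNReal.ofReal (mpDensity c x)

/-- The map `φ(a) = a + ya/(a-1)` sending a spike outside `[1-√y, 1+√y]` to the a.s. limit
of the corresponding extreme sample eigenvalue, outside the Marčenko–Pastur support. -/
noncomputable def phiSpike (y a : ℝ) : ℝ := a + y * a / (a - 1)

/-!
For `y < 1` the law `F_y` has no atom, and its density on the support `[m - r, m + r]`
(`m = 1 + y`, `r = 2√y`) is `√(r² - (x - m)²) / (2πyx)`, so `m₂(L)` is `(2πy)⁻¹` times the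
elementary integral of `x √(r² - (x - m)²) / (L - x)²`. That integrand has an explicit primitive,
an algebraic part plus two arcsines, in terms of `s = ±√((L - m)² - r²)` taken with the sign of
`L - m`; its increment over the support is `π (L - s)(L - m - s) / s`. At `L = φ(a)` one has
`L - m = (a - 1) + y/(a - 1)` and `s = (a - 1) - y/(a - 1)`.
-/

open Set

lemma HasDerivAt.arcsin_of_one_sub_sq_eq {g : ℝ → ℝ} {g' q x : ℝ} (hg : HasDerivAt g g' x)
    (hq : 0 < q) (h : 1 - g x ^ 2 = q ^ 2) : HasDerivAt (fun t => arcsin (g t)) (g' / q) x := by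
  have hlt : g x ^ 2 < 1 := by nlinarith
  have h₁ : g x ≠ -1 := by rintro h'; rw [h'] at hlt; norm_num at hlt
  have h₂ : g x ≠ 1 := by rintro h'; rw [h'] at hlt; norm_num at hlt
  have := (hasDerivAt_arcsin h₁ h₂).comp x hg
  rw [h, sqrt_sq hq.le, one_div, ← div_eq_inv_mul] at this
  exact this

section Primitive

variable {m r L s x : ℝ}

lemma hasDerivAt_sqrt_sq_sub_sq (hR : 0 < r ^ 2 - (x - m) ^ 2) :
    HasDerivAt (fun t => √(r ^ 2 - (t - m) ^ 2)) (-(x - m) / √(r ^ 2 - (x - m) ^ 2)) x := by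
  have h : HasDerivAt (fun t => r ^ 2 - (t - m) ^ 2) (-(2 * (x - m))) x := by
    simpa using (((hasDerivAt_id x).sub_const m).pow 2).const_sub (r ^ 2)
  refine (h.sqrt hR.ne').congr_deriv ?_
  field_simp

lemma hasDerivAt_arcsin_sub_div (hr : 0 < r) (hR : 0 < r ^ 2 - (x - m) ^ 2) :
    HasDerivAt (fun t => arcsin ((t - m) / r)) (1 / √(r ^ 2 - (x - m) ^ 2)) x := by
  have h : HasDerivAt (fun t => (t - m) / r) (1 / r) x :=
    ((hasDerivAt_id x).sub_const m).div_const r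
  refine (h.arcsin_of_one_sub_sq_eq (div_pos (sqrt_pos.2 hR) hr) ?_).congr_deriv ?_
  · rw [div_pow, div_pow, sq_sqrt hR.le]; field_simp
  · field_simp

lemma hasDerivAt_arcsin_moebius (hr : 0 < r) (hR : 0 < r ^ 2 - (x - m) ^ 2)
    (hs : s ^ 2 = (L - m) ^ 2 - r ^ 2) (hsx : 0 < s * (L - x)) :
    HasDerivAt (fun t => arcsin ((r ^ 2 - (L - m) * (t - m)) / (r * (L - t))))
      (-s / (√(r ^ 2 - (x - m) ^ 2) * (L - x))) x := by
  have hs0 : s ≠ 0 := by rintro rfl; simp at hsx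
  have hLx : L - x ≠ 0 := by rintro h; simp [h] at hsx
  have hN : HasDerivAt (fun t => r ^ 2 - (L - m) * (t - m)) (-(L - m)) x := by
    simpa using (((hasDerivAt_id x).sub_const m).const_mul (L - m)).const_sub (r ^ 2)
  have hD : HasDerivAt (fun t => r * (L - t)) (-r) x := by
    simpa using ((hasDerivAt_id x).const_sub L).const_mul r
  have hW : HasDerivAt (fun t => (r ^ 2 - (L - m) * (t - m)) / (r * (L - t)))
      (-s ^ 2 / (r * (L - x) ^ 2)) x := by
    refine (hN.div hD (mul_ne_zero hr.ne' hLx)).congr_deriv ?_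
    field_simp
    linear_combination hs
  have hq : 0 < s * (L - x) * √(r ^ 2 - (x - m) ^ 2) / (r * (L - x) ^ 2) := by positivity
  refine (hW.arcsin_of_one_sub_sq_eq hq ?_).congr_deriv ?_
  · rw [div_pow, div_pow, mul_pow _ √_, mul_pow s, sq_sqrt hR.le, hs]
    field_simp
    ring
  · field_simp

noncomputable def sqrtMomentPrimitive (m r L s t : ℝ) : ℝ :=
  √(r ^ 2 - (t - m) ^ 2) * (1 + L / (L - t)) - (2 * L - m) * arcsin ((t - m) / r)
    - (L * (L - m) + s ^ 2) / s * arcsin ((r ^ 2 - (L - m) * (t - m)) / (r * (L - t)))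

lemma hasDerivAt_sqrtMomentPrimitive (hr : 0 < r) (hR : 0 < r ^ 2 - (x - m) ^ 2)
    (hs : s ^ 2 = (L - m) ^ 2 - r ^ 2) (hsx : 0 < s * (L - x)) :
    HasDerivAt (sqrtMomentPrimitive m r L s) (x * √(r ^ 2 - (x - m) ^ 2) / (L - x) ^ 2) x := by
  have hs0 : s ≠ 0 := by rintro rfl; simp at hsx
  have hLx : L - x ≠ 0 := by rintro h; simp [h] at hsx
  have hfactor : HasDerivAt (fun t => 1 + L / (L - t)) (L / (L - x) ^ 2) x := by
    refine (((hasDerivAt_const x L).div ((hasDerivAt_id x).const_sub L) hLx).const_add 1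
      ).congr_deriv ?_
    simp
  have h := (((hasDerivAt_sqrt_sq_sub_sq hR).mul hfactor).sub
    ((hasDerivAt_arcsin_sub_div hr hR).const_mul (2 * L - m))).sub
    ((hasDerivAt_arcsin_moebius hr hR hs hsx).const_mul ((L * (L - m) + s ^ 2) / s))
  refine h.congr_deriv ?_
  field_simp
  linear_combination (L - x) * sq_sqrt hR.le + (L - x) * hs

lemma pos_mul_sub_of_mem_Icc (hs : s ^ 2 = (L - m) ^ 2 - r ^ 2) (hsm : 0 < s * (L - m))
    (hx : x ∈ Icc (m - r) (m + r)) : 0 < s * (L - x) := by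
  have hs0 : s ≠ 0 := by rintro rfl; simp at hsm
  have hsr : (s * r) ^ 2 < (s * (L - m)) ^ 2 := by
    nlinarith [pow_pos (sq_pos_of_ne_zero hs0) 2]
  have habs : |s * (x - m)| < s * (L - m) := by
    refine lt_of_le_of_lt ?_ (abs_lt_of_sq_lt_sq hsr hsm.le)
    rw [abs_mul, abs_mul, abs_of_nonneg (by linarith [hx.1, hx.2] : 0 ≤ r)]
    exact mul_le_mul_of_nonneg_left (abs_sub_le_iff.2 ⟨by linarith [hx.2], by linarith [hx.1]⟩)
      (abs_nonneg s)
  linarith [le_abs_self (s * (x - m))]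

theorem integral_mul_sqrt_div_sq (hr : 0 < r) (hs : s ^ 2 = (L - m) ^ 2 - r ^ 2)
    (hsm : 0 < s * (L - m)) :
    ∫ x in (m - r)..(m + r), x * √(r ^ 2 - (x - m) ^ 2) / (L - x) ^ 2
      = π * (L - s) * (L - m - s) / s := by
  have hs0 : s ≠ 0 := by rintro rfl; simp at hsm
  have hLx : ∀ x ∈ Icc (m - r) (m + r), L - x ≠ 0 := fun x hx h => by
    simpa [h] using pos_mul_sub_of_mem_Icc hs hsm hx
  have hcont : ContinuousOn (sqrtMomentPrimitive m r L s) (Icc (m - r) (m + r)) := by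
    have hW : ContinuousOn (fun t => (r ^ 2 - (L - m) * (t - m)) / (r * (L - t)))
        (Icc (m - r) (m + r)) :=
      ContinuousOn.div (by fun_prop) (by fun_prop) fun x hx => mul_ne_zero hr.ne' (hLx x hx)
    have hS : ContinuousOn (fun t => √(r ^ 2 - (t - m) ^ 2) * (1 + L / (L - t)))
        (Icc (m - r) (m + r)) :=
      ContinuousOn.mul (by fun_prop)
        (continuousOn_const.add (continuousOn_const.div (by fun_prop) hLx))
    exact (hS.sub (continuousOn_const.mul (continuous_arcsin.comp_continuousOn (by fun_prop)))).sub
      (continuousOn_const.mul (continuous_arcsin.comp_continuousOn hW))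
  have hint : IntervalIntegrable (fun x => x * √(r ^ 2 - (x - m) ^ 2) / (L - x) ^ 2) volume
      (m - r) (m + r) := by
    refine ContinuousOn.intervalIntegrable ?_
    rw [uIcc_of_le (by linarith)]
    exact ContinuousOn.div (by fun_prop) (by fun_prop) fun x hx => pow_ne_zero 2 (hLx x hx)
  rw [intervalIntegral.integral_eq_sub_of_hasDerivAt_of_le (by linarith) hcont (fun x hx =>
    hasDerivAt_sqrtMomentPrimitive hr (by nlinarith [hx.1, hx.2]) hs
      (pos_mul_sub_of_mem_Icc hs hsm (Ioo_subset_Icc_self hx))) hint]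
  have hW₁ : (r ^ 2 - (L - m) * (m + r - m)) / (r * (L - (m + r))) = -1 := by
    rw [div_eq_iff (mul_ne_zero hr.ne' (hLx _ (right_mem_Icc.2 (by linarith))))]; ring
  have hW₂ : (r ^ 2 - (L - m) * (m - r - m)) / (r * (L - (m - r))) = 1 := by
    rw [div_eq_iff (mul_ne_zero hr.ne' (hLx _ (left_mem_Icc.2 (by linarith))))]; ring
  simp only [sqrtMomentPrimitive]
  rw [hW₁, hW₂]
  simp only [add_sub_cancel_left, sub_sub_cancel_left, sub_self, neg_div, div_self hr.ne', neg_sq,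
    arcsin_one, arcsin_neg, sqrt_zero, zero_mul]
  field_simp
  ring

end Primitive

lemma lt_sq_sub_one_of_notMem_Icc {y a : ℝ} (hy : 0 ≤ y)
    (hout : a ∉ Icc (1 - √y) (1 + √y)) : y < (a - 1) ^ 2 := by
  rw [← sq_sqrt hy]
  rcases lt_or_ge a (1 - √y) with h | h
  · nlinarith [sqrt_nonneg y]
  · have : 1 + √y < a := lt_of_not_ge fun h' => hout ⟨h, h'⟩
    nlinarith [sqrt_nonneg y]

lemma measurable_mpDensity (c : ℝ) : Measurable (mpDensity c) :=
  Measurable.ite measurableSet_Icc (by fun_prop) measurable_const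

lemma mpDensity_nonneg {c : ℝ} (hc : 0 ≤ c) (x : ℝ) : 0 ≤ mpDensity c x := by
  unfold mpDensity
  split_ifs with h
  · have : 0 ≤ x := (sq_nonneg _).trans h.1
    positivity
  · exact le_rfl

lemma mpDensity_eq_ite {c : ℝ} (hc : 0 ≤ c) (x : ℝ) :
    mpDensity c x = if x ∈ Icc (1 + c - 2 * √c) (1 + c + 2 * √c)
      then √((2 * √c) ^ 2 - (x - (1 + c)) ^ 2) / (2 * π * c * x) else 0 := by
  have hA : (1 - √c) ^ 2 = 1 + c - 2 * √c := by linear_combination sq_sqrt hc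
  have hB : (1 + √c) ^ 2 = 1 + c + 2 * √c := by linear_combination sq_sqrt hc
  simp only [mpDensity, hA, hB, mem_Icc]
  congr 4
  ring

lemma mpLaw_eq_withDensity {c : ℝ} (hc0 : 0 < c) (hc1 : c ≤ 1) :
    mpLaw c = volume.withDensity fun x => ENNReal.ofReal (mpDensity c x) := by
  have : 1 - 1 / c ≤ 0 := by rw [sub_nonpos, le_div_iff₀ hc0]; linarith
  rw [mpLaw, ENNReal.ofReal_eq_zero.2 this, zero_smul, zero_add]

theorem integral_mpLaw {c : ℝ} (hc0 : 0 < c) (hc1 : c ≤ 1) (f : ℝ → ℝ) :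
    ∫ x, f x ∂mpLaw c = ∫ x in (1 + c - 2 * √c)..(1 + c + 2 * √c),
      √((2 * √c) ^ 2 - (x - (1 + c)) ^ 2) / (2 * π * c * x) * f x := by
  have hle : 1 + c - 2 * √c ≤ 1 + c + 2 * √c := by linarith [sqrt_nonneg c]
  rw [mpLaw_eq_withDensity hc0 hc1, integral_withDensity_eq_integral_toReal_smul
      (measurable_mpDensity c).ennreal_ofReal (ae_of_all _ fun _ => ENNReal.ofReal_lt_top),
    ← setIntegral_eq_integral_of_forall_compl_eq_zero fun x hx => by
      rw [mpDensity_eq_ite hc0.le, if_neg hx, ENNReal.ofReal_zero, ENNReal.toReal_zero,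
        zero_smul],
    integral_Icc_eq_integral_Ioc, ← intervalIntegral.integral_of_le hle]
  refine intervalIntegral.integral_congr fun x hx => ?_
  rw [uIcc_of_le hle] at hx
  rw [ENNReal.toReal_ofReal (mpDensity_nonneg hc0.le x), mpDensity_eq_ite hc0.le, if_pos hx,
    smul_eq_mul]

theorem mp_m2_phi_general (y a : ℝ) (hy0 : 0 < y) (hy1 : y < 1)
    (hout : a ∉ Set.Icc (1 - Real.sqrt y) (1 + Real.sqrt y)) :
    (∫ x, x ^ 2 / (phiSpike y a - x) ^ 2 ∂mpLaw y) =
      ((a - 1) + y * (a + 1)) / ((a - 1) * ((a - 1) ^ 2 - y)) := by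
  have hgap := lt_sq_sub_one_of_notMem_Icc hy0.le hout
  have ha : a - 1 ≠ 0 := fun h => by simp [h] at hgap; linarith
  have hL : phiSpike y a - (1 + y) = ((a - 1) ^ 2 + y) / (a - 1) := by
    unfold phiSpike; field_simp; ring
  set s := ((a - 1) ^ 2 - y) / (a - 1) with hs_def
  have hs : s ^ 2 = (phiSpike y a - (1 + y)) ^ 2 - (2 * √y) ^ 2 := by
    rw [hs_def, hL, mul_pow, sq_sqrt hy0.le]; field_simp; ring
  have hsm : 0 < s * (phiSpike y a - (1 + y)) := by
    rw [hL, div_mul_div_comm]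
    exact div_pos (mul_pos (sub_pos.2 hgap) (by positivity)) (mul_self_pos.2 ha)
  have hintegrand : ∀ x, √((2 * √y) ^ 2 - (x - (1 + y)) ^ 2) / (2 * π * y * x)
      * (x ^ 2 / (phiSpike y a - x) ^ 2) = (2 * π * y)⁻¹
        * (x * √((2 * √y) ^ 2 - (x - (1 + y)) ^ 2) / (phiSpike y a - x) ^ 2) := by
    intro x
    rcases eq_or_ne x 0 with rfl | hx
    · simp
    · field_simp
  rw [integral_mpLaw hy0 hy1.le, funext hintegrand, intervalIntegral.integral_const_mul,
    integral_mul_sqrt_div_sq (by positivity) hs hsm, hs_def, phiSpike]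
  have hgap' := (sub_pos.2 hgap).ne'
  field_simp
  ring

/-- `m₂(φ(a)) = ∫ x²/(φ(a)−x)² dF_y(x) = ((a−1)+y(a+1)) / ((a−1)((a−1)²−y))`. -/
theorem mp_m2_phi (y a : ℝ) (hy0 : 0 < y) (hy1 : y < 1) (ha : 0 < a)
    (hout : a ∉ Set.Icc (1 - Real.sqrt y) (1 + Real.sqrt y)) :
    (∫ x, x ^ 2 / (phiSpike y a - x) ^ 2 ∂mpLaw y) =
      ((a - 1) + y * (a + 1)) / ((a - 1) * ((a - 1) ^ 2 - y)) :=
  mp_m2_phi_general y a hy0 hy1 hout
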